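/- Let X, Y, Z, W be subsets of Fin m with |Y| + |Z| + |W| ≥ 3, and let A = Δ_X^c, B = Δ_Y, C = Δ_Z, E = Δ_W. Then the binary code {c_t | t ∈ (Fin m → 𝔽₂)⁴} is self-orthogonal with respect to the Euclidean inner product: for all messages t, t', Σ_{(a,b,c,e) ∈ A×B×C×E} c_t(a,b,c,e)·c_{t'}(a,b,c,e) = 0 in 𝔽₂. -/
import Mathlib


open Finset

/-- Euclidean dot product of vectors over `𝔽₂`. -/
def dotp {m : ℕ} (x y : Fin m → ZMod 2) : ZMod 2 := ∑ i, x i * y i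

/-- Support of a vector over `𝔽₂`. -/
def supp {m : ℕ} (v : Fin m → ZMod 2) : Finset (Fin m) :=
  Finset.univ.filter fun i => v i ≠ 0

/-- The simplicial complex `Δ_S` generated by `S ⊆ [m]`. -/
def delta {m : ℕ} (S : Finset (Fin m)) : Finset (Fin m → ZMod 2) :=
  Finset.univ.filter fun u => supp u ⊆ S

/-- The complement `Δ_S^c` of the simplicial complex generated by `S`. -/
def deltac {m : ℕ} (S : Finset (Fin m)) : Finset (Fin m → ZMod 2) :=
  Finset.univ \ delta S

/-- A message `(x₁, x₂, x₃, x₄)` consisting of four vectors over `𝔽₂`. -/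
abbrev Msg (m : ℕ) :=
  (Fin m → ZMod 2) × (Fin m → ZMod 2) × (Fin m → ZMod 2) × (Fin m → ZMod 2)

/-- The value of the codeword of the subfield code `C_D^{(2)}` associated to the
message `t = (x₁,x₂,x₃,x₄)` at the position `p = (a,b,c,e)`:
`(x₁+x₄)·a + x₃·b + x₂·c + x₁·e`. -/
def cword {m : ℕ} (t p : Msg m) : ZMod 2 :=
  dotp (t.1 + t.2.2.2) p.1 + dotp t.2.2.1 p.2.1 + dotp t.2.1 p.2.2.1 +
    dotp t.1 p.2.2.2

/-- Hamming weight of the codeword associated to the message `t`, for the code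
with defining positions `A × B × C × E`. -/
def cw {m : ℕ} (A B C E : Finset (Fin m → ZMod 2)) (t : Msg m) : ℕ :=
  ((A ×ˢ B ×ˢ C ×ˢ E).filter fun p => cword t p = 1).card

/- Auxiliary lemmas -/

lemma z2_add_self (x : ZMod 2) : x + x = 0 := by fin_cases x <;> decide

lemma fun_add_self {m : ℕ} (v : Fin m → ZMod 2) : v + v = 0 := by
  funext i; exact z2_add_self (v i)

lemma fun_add_eq_zero {m : ℕ} {x y : Fin m → ZMod 2} (h : x + y = 0) : x = y := by
  have := congrArg (· + y) h
  simpa [add_assoc, fun_add_self] using this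

lemma dotp_add_right {m : ℕ} (x u v : Fin m → ZMod 2) :
    dotp x (u + v) = dotp x u + dotp x v := by
  simp [dotp, mul_add, Finset.sum_add_distrib]

lemma mem_delta_iff {m : ℕ} {S : Finset (Fin m)} {u : Fin m → ZMod 2} :
    u ∈ delta S ↔ ∀ i, u i ≠ 0 → i ∈ S := by
  simp [delta, supp, Finset.subset_iff]

lemma delta_add_mem {m : ℕ} {S : Finset (Fin m)} {u v : Fin m → ZMod 2}
    (hu : u ∈ delta S) (hv : v ∈ delta S) : u + v ∈ delta S := by
  rw [mem_delta_iff] at hu hv ⊢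
  intro i hi
  by_cases h1 : u i = 0
  · refine hv i ?_
    intro h2
    exact hi (by simp [Pi.add_apply, h1, h2])
  · exact hu i h1

lemma card_delta {m : ℕ} (S : Finset (Fin m)) : (delta S).card = 2 ^ S.card := by
  have hrw : delta S =
      Fintype.piFinset (fun i => if i ∈ S then (Finset.univ : Finset (ZMod 2)) else {0}) := by
    ext u
    simp only [Fintype.mem_piFinset, mem_delta_iff]
    constructor
    · intro h i
      by_cases hi : i ∈ S
      · simp [hi]
      · simp only [hi, if_false, Finset.mem_singleton]
        by_contra h0
        exact hi (h i h0)
    · intro h i hne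
      by_contra hi
      have := h i
      simp only [hi, if_false, Finset.mem_singleton] at this
      exact hne this
  rw [hrw, Fintype.card_piFinset]
  have : ∀ i : Fin m,
      ((if i ∈ S then (Finset.univ : Finset (ZMod 2)) else {0}).card)
        = if i ∈ S then 2 else 1 := by
    intro i; by_cases hi : i ∈ S <;> simp [hi]
  simp only [this]
  rw [Finset.prod_ite_mem, Finset.univ_inter, Finset.prod_const]

/-- The shift of a codeword under translation of the last three coordinates. -/
lemma cword_shift {m : ℕ} (t p : Msg m) (u₁ u₂ u₃ : Fin m → ZMod 2) :
    cword t (p.1, p.2.1 + u₁, p.2.2.1 + u₂, p.2.2.2 + u₃)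
      = cword t p + (dotp t.2.2.1 u₁ + dotp t.2.1 u₂ + dotp t.1 u₃) := by
  simp only [cword, dotp_add_right]
  ring

theorem stmt16 (m : ℕ) (hm : 0 < m) (X Y Z W : Finset (Fin m))
    (h : 3 ≤ Y.card + Z.card + W.card) :
    ∀ t t' : Msg m,
      ∑ p ∈ deltac X ×ˢ delta Y ×ˢ delta Z ×ˢ delta W,
        cword t p * cword t' p = (0 : ZMod 2) := by
  intro t t'
  -- the two linear functionals on triples
  set l : (Fin m → ZMod 2) × (Fin m → ZMod 2) × (Fin m → ZMod 2) → ZMod 2 × ZMod 2 :=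
    fun v => (dotp t.2.2.1 v.1 + dotp t.2.1 v.2.1 + dotp t.1 v.2.2,
              dotp t'.2.2.1 v.1 + dotp t'.2.1 v.2.1 + dotp t'.1 v.2.2) with hl
  -- pigeonhole: find two distinct triples with the same functional values
  have hcard : (Finset.univ : Finset (ZMod 2 × ZMod 2)).card
      < ((delta Y ×ˢ delta Z ×ˢ delta W : Finset _)).card := by
    simp only [Finset.card_product, card_delta, Finset.card_univ]
    have h4 : Fintype.card (ZMod 2 × ZMod 2) = 4 := by decide
    rw [h4, ← pow_add, ← pow_add]
    calc (4 : ℕ) < 2 ^ 3 := by norm_num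
      _ ≤ 2 ^ (Y.card + (Z.card + W.card)) := by
          apply Nat.pow_le_pow_right (by norm_num)
          omega
  obtain ⟨v, hv, w, hw, hvw, heq⟩ :=
    Finset.exists_ne_map_eq_of_card_lt_of_maps_to hcard (fun a _ => Finset.mem_univ (l a))
  simp only [Finset.mem_product] at hv hw
  -- the translation vector
  set u₁ : Fin m → ZMod 2 := v.1 + w.1 with hu₁
  set u₂ : Fin m → ZMod 2 := v.2.1 + w.2.1 with hu₂
  set u₃ : Fin m → ZMod 2 := v.2.2 + w.2.2 with hu₃
  have hu₁m : u₁ ∈ delta Y := delta_add_mem hv.1 hw.1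
  have hu₂m : u₂ ∈ delta Z := delta_add_mem hv.2.1 hw.2.1
  have hu₃m : u₃ ∈ delta W := delta_add_mem hv.2.2 hw.2.2
  have hne : ¬(u₁ = 0 ∧ u₂ = 0 ∧ u₃ = 0) := by
    rintro ⟨h1, h2, h3⟩
    exact hvw (Prod.ext (fun_add_eq_zero h1)
      (Prod.ext (fun_add_eq_zero h2) (fun_add_eq_zero h3)))
  have heq1 : (l v).1 = (l w).1 := by rw [heq]
  have heq2 : (l v).2 = (l w).2 := by rw [heq]
  have hlt : dotp t.2.2.1 u₁ + dotp t.2.1 u₂ + dotp t.1 u₃ = 0 := by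
    simp only [hu₁, hu₂, hu₃, dotp_add_right]
    have := heq1
    simp only [hl] at this
    rw [show dotp t.2.2.1 v.1 + dotp t.2.2.1 w.1 + (dotp t.2.1 v.2.1 + dotp t.2.1 w.2.1)
        + (dotp t.1 v.2.2 + dotp t.1 w.2.2)
        = (dotp t.2.2.1 v.1 + dotp t.2.1 v.2.1 + dotp t.1 v.2.2)
          + (dotp t.2.2.1 w.1 + dotp t.2.1 w.2.1 + dotp t.1 w.2.2) by ring, this]
    exact z2_add_self _
  have hlt' : dotp t'.2.2.1 u₁ + dotp t'.2.1 u₂ + dotp t'.1 u₃ = 0 := by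
    simp only [hu₁, hu₂, hu₃, dotp_add_right]
    have := heq2
    simp only [hl] at this
    rw [show dotp t'.2.2.1 v.1 + dotp t'.2.2.1 w.1 + (dotp t'.2.1 v.2.1 + dotp t'.2.1 w.2.1)
        + (dotp t'.1 v.2.2 + dotp t'.1 w.2.2)
        = (dotp t'.2.2.1 v.1 + dotp t'.2.1 v.2.1 + dotp t'.1 v.2.2)
          + (dotp t'.2.2.1 w.1 + dotp t'.2.1 w.2.1 + dotp t'.1 w.2.2) by ring, this]
    exact z2_add_self _
  -- the involution
  refine Finset.sum_involution
    (fun p _ => (p.1, p.2.1 + u₁, p.2.2.1 + u₂, p.2.2.2 + u₃)) ?_ ?_ ?_ ?_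
  · intro p hp
    have hshift : ∀ s : Msg m,
        cword s (p.1, p.2.1 + u₁, p.2.2.1 + u₂, p.2.2.2 + u₃) = cword s p
          + (dotp s.2.2.1 u₁ + dotp s.2.1 u₂ + dotp s.1 u₃) := fun s => cword_shift s p u₁ u₂ u₃
    rw [hshift t, hshift t', hlt, hlt', add_zero, add_zero]
    exact z2_add_self _
  · intro p hp _ hgp
    have h1 := congrArg Prod.fst hgp
    have h2 := congrArg (fun q : Msg m => q.2.1) hgp
    have h3 := congrArg (fun q : Msg m => q.2.2.1) hgp
    have h4 := congrArg (fun q : Msg m => q.2.2.2) hgp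
    simp only at h2 h3 h4
    exact hne ⟨by simpa using h2, by simpa using h3, by simpa using h4⟩
  · intro p hp
    simp only [Finset.mem_product] at hp ⊢
    exact ⟨hp.1, delta_add_mem hp.2.1 hu₁m, delta_add_mem hp.2.2.1 hu₂m,
      delta_add_mem hp.2.2.2 hu₃m⟩
  · intro p hp
    have : ∀ x : Fin m → ZMod 2, ∀ u : Fin m → ZMod 2, x + u + u = x := by
      intro x u; rw [add_assoc, fun_add_self, add_zero]
    simp only [this]
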